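/- Assume 0 < w_b, 0 < w_f and w_b + w_f < 1, and let f be a solution of the Collatz functional equation for (k, w_b, w_f) with coefficients (aₙ). If the Collatz orbit of k reaches the number 2^h·o for some h ≥ 0 and odd positive integer o (i.e. Col^[i](k) = 2^h·o for some i ≥ 0), then a_{2^j·o} > 0 for every j with 0 ≤ j ≤ h. -/

import Mathlib

/-- The open unit disc in `ℂ`. -/
def openUnitDisc : Set ℂ := {z : ℂ | ‖z‖ < 1}

/-- `f` is a solution of the Collatz functional equation for `(k, wb, wf)`:
it is analytic and bounded on the open unit disc and satisfies the functional equation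
`2 f(x²) = wb (f(x) + f(−x)) + wf x² (f(x⁶) − f(−x⁶)) + 2 x^(2k)` there. -/
def IsSolution (k : ℕ) (wb wf : ℝ) (f : ℂ → ℂ) : Prop :=
  AnalyticOnNhd ℂ f openUnitDisc ∧
  (∃ C : ℝ, ∀ z ∈ openUnitDisc, ‖f z‖ ≤ C) ∧
  ∀ x : ℂ, ‖x‖ < 1 →
    2 * f (x ^ 2) =
      (wb : ℂ) * (f x + f (-x)) + (wf : ℂ) * x ^ 2 * (f (x ^ 6) - f (-x ^ 6)) +
        2 * x ^ (2 * k)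

/-- `a` is the sequence of Taylor coefficients of `f` at `0`:
`f x = Σ aₙ xⁿ` on the open unit disc. -/
def HasCoeffs (f : ℂ → ℂ) (a : ℕ → ℂ) : Prop :=
  ∀ x : ℂ, ‖x‖ < 1 → HasSum (fun n => a n * x ^ n) (f x)

/-- The Collatz map: `3n+1` on odd numbers, `n/2` on even numbers. -/
def Col (n : ℕ) : ℕ := if n % 2 = 1 then 3 * n + 1 else n / 2

/-!
Comparing Taylor coefficients in the functional equation, written in `y = x²`, gives
`aₙ = w_b a_{2n} + [n ≡ 4 mod 6] w_f a_{n/3} + [n = k]`: the coefficient at `n` is fed by the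
coefficients at the Collatz preimages of `n`. By Cauchy's estimate the coefficients are bounded,
and as `w_b + w_f < 1` the recursion contracts the sup norm. Hence the imaginary parts, which
satisfy the homogeneous recursion, vanish, and so do the negative parts of the real parts. Once
the real parts are nonnegative, the recursion carries positivity from `a_k ≥ 1` forward along the
Collatz orbit of `k`, which contains every `2^j o` with `j ≤ h`.
-/

open Metric FormalMultilinearSeries Filter Topology

lemma openUnitDisc_eq_ball : openUnitDisc = ball (0 : ℂ) 1 := by
  ext z
  simp [openUnitDisc]

namespace HasCoeffs

variable {f : ℂ → ℂ} {a : ℕ → ℂ}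

lemma hasFPowerSeriesOnBall (ha : HasCoeffs f a) :
    HasFPowerSeriesOnBall f (ofScalars ℂ a) 0 1 where
  r_le := by
    refine ENNReal.le_of_forall_nnreal_lt fun r hr => (ofScalars ℂ a).le_radius_of_summable_norm ?_
    have hr' : ‖((r : ℝ) : ℂ)‖ < 1 := by simpa using hr
    simpa [ofScalars_norm] using (ha _ hr').summable.norm
  r_pos := one_pos
  hasSum {y} hy := by
    rw [mem_eball, edist_zero_right, ← ofReal_norm, ENNReal.ofReal_lt_one] at hy
    simpa [ofScalars_apply_eq, mul_comm] using ha y hy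

lemma unique {b : ℕ → ℂ} (ha : HasCoeffs f a) (hb : HasCoeffs f b) : a = b :=
  ofScalars_series_injective ℂ ℂ <|
    ha.hasFPowerSeriesOnBall.hasFPowerSeriesAt.eq_formalMultilinearSeries
      hb.hasFPowerSeriesOnBall.hasFPowerSeriesAt

lemma eq_iteratedDeriv_div_factorial (ha : HasCoeffs f a) (n : ℕ) :
    a n = iteratedDeriv n f 0 / n.factorial := by
  have hp := ha.hasFPowerSeriesOnBall.hasFPowerSeriesAt
  exact congrFun (ofScalars_series_injective ℂ ℂ
    (hp.eq_formalMultilinearSeries hp.analyticAt.hasFPowerSeriesAt)) n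

lemma norm_le (ha : HasCoeffs f a) (hf : DifferentiableOn ℂ f (ball 0 1)) {C : ℝ}
    (hC : ∀ z ∈ ball (0 : ℂ) 1, ‖f z‖ ≤ C) (n : ℕ) : ‖a n‖ ≤ C := by
  have hR : ∀ R ∈ Set.Ioo (0 : ℝ) 1, ‖a n‖ * R ^ n ≤ C := by
    rintro R ⟨hR0, hR1⟩
    have hcl : closedBall (0 : ℂ) R ⊆ ball 0 1 := closedBall_subset_ball hR1
    have hcauchy := Complex.norm_iteratedDeriv_le_of_forall_mem_sphere_norm_le n hR0
      (hf.diffContOnCl_ball hcl) fun z hz => hC z (hcl (sphere_subset_closedBall hz))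
    rw [ha.eq_iteratedDeriv_div_factorial, norm_div, Complex.norm_natCast, div_mul_eq_mul_div,
      div_le_iff₀ (by positivity)]
    rw [le_div_iff₀ (by positivity)] at hcauchy
    linarith
  have hlim : Tendsto (fun R : ℝ => ‖a n‖ * R ^ n) (𝓝[<] 1) (𝓝 (‖a n‖)) := by
    simpa using ((show Continuous fun R : ℝ => ‖a n‖ * R ^ n by fun_prop).tendsto 1).mono_left
      nhdsWithin_le_nhds
  exact le_of_tendsto hlim (mem_of_superset (Ioo_mem_nhdsLT zero_lt_one) hR)

lemma hasSum_even_odd (ha : HasCoeffs f a) {x : ℂ} (hx : ‖x‖ < 1) :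
    HasSum (fun n => a (2 * n) * x ^ (2 * n)) ((f x + f (-x)) / 2) ∧
      HasSum (fun n => a (2 * n + 1) * x ^ (2 * n + 1)) ((f x - f (-x)) / 2) := by
  have hs := (ha x hx).summable
  obtain ⟨E, he⟩ := hs.comp_injective (mul_right_injective₀ (two_ne_zero' ℕ))
  obtain ⟨O, ho⟩ := hs.comp_injective fun m n (h : 2 * m + 1 = 2 * n + 1) => by omega
  simp only [Function.comp_def] at he ho
  have hplus : f x = E + O := (ha x hx).unique (he.even_add_odd ho)
  have hminus : f (-x) = E + -O := (ha (-x) (by rwa [norm_neg])).unique <| HasSum.even_add_odd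
    (by simpa only [(even_two_mul _).neg_pow] using he)
    (by simpa only [(odd_two_mul_add_one _).neg_pow, mul_neg] using ho.neg)
  constructor
  · rwa [show (f x + f (-x)) / 2 = E by rw [hplus, hminus]; ring]
  · rwa [show (f x - f (-x)) / 2 = O by rw [hplus, hminus]; ring]

end HasCoeffs

lemma nonpos_of_forall_le_mul {ι : Type*} {u : ι → ℝ} {s : ℝ} (hs0 : 0 ≤ s) (hs1 : s < 1)
    (hu : BddAbove (Set.range u)) (h : ∀ B, 0 ≤ B → (∀ i, u i ≤ B) → ∀ i, u i ≤ s * B) (i : ι) :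
    u i ≤ 0 := by
  obtain ⟨C, hC⟩ := hu
  have hN : ∀ N : ℕ, ∀ i, u i ≤ s ^ N * max C 0 := by
    intro N
    induction N with
    | zero => simpa using fun i => (hC ⟨i, rfl⟩).trans (le_max_left C 0)
    | succ N ih => rw [pow_succ', mul_assoc]; exact h _ (by positivity) ih
  have hlim : Tendsto (fun N : ℕ => s ^ N * max C 0) atTop (𝓝 0) := by
    simpa using (tendsto_pow_atTop_nhds_zero_of_lt_one hs0 hs1).mul_const (max C 0)
  exact ge_of_tendsto' hlim fun N => hN N i

section CollatzPull

variable {M N : Type*} [AddCommMonoid M] [Module ℝ M] [AddCommMonoid N] [Module ℝ N]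

/-- The Collatz preimages of `n` are `2 * n` and, when `n % 6 = 4`, the odd number `n / 3`. -/
def collatzPull (wb wf : ℝ) (b : ℕ → M) (n : ℕ) : M :=
  wb • b (2 * n) + if n % 6 = 4 then wf • b (n / 3) else 0

lemma map_collatzPull (L : M →ₗ[ℝ] N) (wb wf : ℝ) (b : ℕ → M) (n : ℕ) :
    L (collatzPull wb wf b n) = collatzPull wb wf (L ∘ b) n := by
  unfold collatzPull
  split_ifs <;> simp

end CollatzPull

section RealCollatzPull

variable {wb wf : ℝ} {r : ℕ → ℝ}

lemma collatzPull_neg (n : ℕ) : collatzPull wb wf (-r) n = -collatzPull wb wf r n := by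
  unfold collatzPull
  split_ifs <;> simp only [Pi.neg_apply, smul_neg, neg_add, add_zero]

lemma collatzPull_le_mul (hwb : 0 ≤ wb) (hwf : 0 ≤ wf) {B : ℝ} (hB : 0 ≤ B)
    (hr : ∀ m, r m ≤ B) (n : ℕ) : collatzPull wb wf r n ≤ (wb + wf) * B := by
  have h2n := mul_le_mul_of_nonneg_left (hr (2 * n)) hwb
  have h3 := mul_le_mul_of_nonneg_left (hr (n / 3)) hwf
  unfold collatzPull
  split_ifs <;> simp only [smul_eq_mul] <;> linarith [mul_nonneg hwf hB]

lemma neg_mul_le_collatzPull (hwb : 0 ≤ wb) (hwf : 0 ≤ wf) {B : ℝ} (hB : 0 ≤ B)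
    (hr : ∀ m, -B ≤ r m) (n : ℕ) : -((wb + wf) * B) ≤ collatzPull wb wf r n := by
  have := collatzPull_le_mul hwb hwf hB (r := -r) (fun m => by simpa using neg_le.mp (hr m)) n
  rw [collatzPull_neg] at this
  linarith

lemma collatzPull_nonneg (hwb : 0 ≤ wb) (hwf : 0 ≤ wf) (hr : ∀ m, 0 ≤ r m) (n : ℕ) :
    0 ≤ collatzPull wb wf r n := by
  simpa using neg_mul_le_collatzPull hwb hwf le_rfl (by simpa using hr) n

lemma collatzPull_col_pos (hwb : 0 < wb) (hwf : 0 < wf) (hr : ∀ m, 0 ≤ r m) {m : ℕ}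
    (hm : 0 < r m) : 0 < collatzPull wb wf r (Col m) := by
  have hwbr := mul_nonneg hwb.le (hr (2 * Col m))
  have hwfr := mul_nonneg hwf.le (hr (Col m / 3))
  unfold Col at *
  split_ifs at * with hodd
  · have := mul_pos hwf hm
    simp only [collatzPull, show (3 * m + 1) % 6 = 4 by omega, if_true,
      show (3 * m + 1) / 3 = m by omega, smul_eq_mul] at *
    linarith
  · have := mul_pos hwb hm
    simp only [collatzPull, show 2 * (m / 2) = m by omega, smul_eq_mul] at *
    split_ifs <;> linarith

lemma pos_of_eq_collatzPull_add {k : ℕ} (hwb : 0 < wb) (hwf : 0 < wf) (hr : ∀ m, 0 ≤ r m)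
    (hrec : ∀ n, r n = collatzPull wb wf r n + if n = k then 1 else 0) (i : ℕ) :
    0 < r (Col^[i] k) := by
  induction i with
  | zero =>
    rw [Function.iterate_zero_apply, hrec, if_pos rfl]
    linarith [collatzPull_nonneg hwb.le hwf.le hr k]
  | succ i ih =>
    rw [Function.iterate_succ_apply', hrec]
    have := collatzPull_col_pos hwb hwf hr ih
    split_ifs <;> linarith

end RealCollatzPull

lemma HasCoeffs.eq_collatzPull_add {k : ℕ} {wb wf : ℝ} {f : ℂ → ℂ} {a : ℕ → ℂ}
    (ha : HasCoeffs f a)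
    (hfe : ∀ x : ℂ, ‖x‖ < 1 →
      2 * f (x ^ 2) = (wb : ℂ) * (f x + f (-x)) + (wf : ℂ) * x ^ 2 * (f (x ^ 6) - f (-x ^ 6)) +
        2 * x ^ (2 * k))
    (n : ℕ) : a n = collatzPull wb wf a n + if n = k then 1 else 0 := by
  suffices HasCoeffs f fun n => collatzPull wb wf a n + if n = k then 1 else 0 from
    congrFun (ha.unique this) n
  intro y hy
  obtain ⟨x, rfl⟩ := IsAlgClosed.exists_pow_nat_eq y two_pos
  have hx : ‖x‖ < 1 := by
    rwa [norm_pow, pow_lt_one_iff_of_nonneg (norm_nonneg x) two_ne_zero] at hy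
  have hx6 : ‖x ^ 6‖ < 1 := by rw [norm_pow]; exact pow_lt_one₀ (norm_nonneg x) hx (by norm_num)
  have heven : HasSum (fun m => a (2 * m) * (x ^ 2) ^ m) ((f x + f (-x)) / 2) := by
    simpa only [← pow_mul] using (ha.hasSum_even_odd hx).1
  have hodd : HasSum (fun m => (if m % 6 = 4 then a (m / 3) else 0) * (x ^ 2) ^ m)
      (x ^ 2 * ((f (x ^ 6) - f (-x ^ 6)) / 2)) := by
    have hinj : Function.Injective fun n : ℕ => 6 * n + 4 := fun m n h => by simp at h; omega
    rw [← hinj.hasSum_iff]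
    · refine ((ha.hasSum_even_odd hx6).2.mul_left (x ^ 2)).congr_fun fun n => ?_
      simp only [Function.comp_apply, show (6 * n + 4) % 6 = 4 by omega,
        show (6 * n + 4) / 3 = 2 * n + 1 by omega, if_true]
      ring
    · rintro m hm
      rw [if_neg fun h => hm ⟨m / 6, by simp only; omega⟩, zero_mul]
  rw [show f (x ^ 2) = wb * ((f x + f (-x)) / 2) + wf * (x ^ 2 * ((f (x ^ 6) - f (-x ^ 6)) / 2)) +
      (x ^ 2) ^ k by linear_combination (hfe x hx) / 2]
  refine (((heven.mul_left (wb : ℂ)).add (hodd.mul_left (wf : ℂ))).add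
    (hasSum_ite_eq k ((x ^ 2) ^ k))).congr_fun fun m => ?_
  simp only [collatzPull, Complex.real_smul]
  split_ifs <;> subst_vars <;> ring

section ComplexCoeffs

variable {k : ℕ} {wb wf : ℝ} {a : ℕ → ℂ}

lemma re_eq_collatzPull_add (hrec : ∀ n, a n = collatzPull wb wf a n + if n = k then 1 else 0)
    (n : ℕ) :
    (a n).re = collatzPull wb wf (fun m => (a m).re) n + if n = k then 1 else 0 := by
  have := map_collatzPull Complex.reLm wb wf a n
  rw [hrec n]
  split_ifs <;> simpa [Function.comp_def] using this

lemma im_eq_collatzPull (hrec : ∀ n, a n = collatzPull wb wf a n + if n = k then 1 else 0)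
    (n : ℕ) : (a n).im = collatzPull wb wf (fun m => (a m).im) n := by
  have := map_collatzPull Complex.imLm wb wf a n
  rw [hrec n]
  split_ifs <;> simpa [Function.comp_def] using this

lemma im_eq_zero_of_eq_collatzPull_add (hwb : 0 ≤ wb) (hwf : 0 ≤ wf) (hw : wb + wf < 1) {C : ℝ}
    (hC : ∀ n, ‖a n‖ ≤ C) (hrec : ∀ n, a n = collatzPull wb wf a n + if n = k then 1 else 0)
    (n : ℕ) : (a n).im = 0 := by
  refine abs_nonpos_iff.mp <| nonpos_of_forall_le_mul (u := fun n => |(a n).im|)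
    (by positivity) hw ⟨C, ?_⟩ (fun B hB hu m => ?_) n
  · rintro _ ⟨m, rfl⟩
    exact (Complex.abs_im_le_norm _).trans (hC m)
  · rw [im_eq_collatzPull hrec, abs_le]
    exact ⟨neg_mul_le_collatzPull hwb hwf hB (fun i => (abs_le.mp (hu i)).1) m,
      collatzPull_le_mul hwb hwf hB (fun i => (abs_le.mp (hu i)).2) m⟩

lemma re_nonneg_of_eq_collatzPull_add (hwb : 0 ≤ wb) (hwf : 0 ≤ wf) (hw : wb + wf < 1) {C : ℝ}
    (hC : ∀ n, ‖a n‖ ≤ C) (hrec : ∀ n, a n = collatzPull wb wf a n + if n = k then 1 else 0)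
    (n : ℕ) : 0 ≤ (a n).re := by
  refine neg_nonpos.mp <| nonpos_of_forall_le_mul (u := fun n => -(a n).re)
    (by positivity) hw ⟨C, ?_⟩ (fun B hB hu m => ?_) n
  · rintro _ ⟨m, rfl⟩
    exact (neg_le_abs _).trans ((Complex.abs_re_le_norm _).trans (hC m))
  · have := neg_mul_le_collatzPull hwb hwf hB (fun i => neg_le.mp (hu i)) m
    rw [re_eq_collatzPull_add hrec]
    split_ifs <;> linarith

end ComplexCoeffs

lemma col_two_mul (n : ℕ) : Col (2 * n) = n := by
  rw [Col, if_neg (by omega)]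
  omega

lemma col_iterate_two_pow_mul (d n : ℕ) : Col^[d] (2 ^ d * n) = n := by
  induction d generalizing n with
  | zero => simp
  | succ d ih => rw [Function.iterate_succ_apply, pow_succ', mul_assoc, col_two_mul, ih]

theorem stmt_13_general (k : ℕ) (wb wf : ℝ) (f : ℂ → ℂ) (a : ℕ → ℂ)
    (hwb : 0 < wb) (hwf : 0 < wf) (hw : wb + wf < 1)
    (hf : IsSolution k wb wf f) (ha : HasCoeffs f a)
    (h o : ℕ)
    (horbit : ∃ i : ℕ, Col^[i] k = 2 ^ h * o) :
    ∀ j : ℕ, j ≤ h → (a (2 ^ j * o)).im = 0 ∧ 0 < (a (2 ^ j * o)).re := by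
  obtain ⟨han, ⟨C, hC⟩, hfe⟩ := hf
  rw [openUnitDisc_eq_ball] at han hC
  have hbdd := ha.norm_le han.differentiableOn hC
  have hrec := ha.eq_collatzPull_add hfe
  obtain ⟨i, hi⟩ := horbit
  intro j hj
  refine ⟨im_eq_zero_of_eq_collatzPull_add hwb.le hwf.le hw hbdd hrec _, ?_⟩
  have hpos := pos_of_eq_collatzPull_add hwb hwf
    (re_nonneg_of_eq_collatzPull_add hwb.le hwf.le hw hbdd hrec) (re_eq_collatzPull_add hrec)
    (h - j + i)
  rwa [Function.iterate_add_apply, hi, show 2 ^ h * o = 2 ^ (h - j) * (2 ^ j * o) by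
    rw [← mul_assoc, ← pow_add, Nat.sub_add_cancel hj], col_iterate_two_pow_mul] at hpos

theorem stmt_13 (k : ℕ) (wb wf : ℝ) (f : ℂ → ℂ) (a : ℕ → ℂ) (hk : 0 < k)
    (hwb : 0 < wb) (hwf : 0 < wf) (hw : wb + wf < 1)
    (hf : IsSolution k wb wf f) (ha : HasCoeffs f a)
    (h o : ℕ) (ho : Odd o) (hopos : 0 < o)
    (horbit : ∃ i : ℕ, Col^[i] k = 2 ^ h * o) :
    ∀ j : ℕ, j ≤ h → (a (2 ^ j * o)).im = 0 ∧ 0 < (a (2 ^ j * o)).re :=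
  stmt_13_general k wb wf f a hwb hwf hw hf ha h o horbit
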